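/- arXiv:1803.08477 — 4 statements merged into one kernel-verified Lean document; each statement's English description precedes it below -/
import Mathlib

section
/- If (F₁,G₁) is a WZ pair, i.e. F₁(n+1,k) - F₁(n,k) = G₁(n,k+1) - G₁(n,k) for all integers n,k ≥ 0 (with k+n in range), then the pair F₂(n,k) = F₁(n,k+n), G₂(n,k) = F₁(n+1,k+n) + G₁(n,k+n) is again a WZ pair: F₂(n+1,k) - F₂(n,k) = G₂(n,k+1) - G₂(n,k). -/
/-- If `(F₁, G₁)` is a WZ pair, then `F₂(n,k) = F₁(n,k+n)`,
`G₂(n,k) = F₁(n+1,k+n) + G₁(n,k+n)` is again a WZ pair. -/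
theorem wz_transform_forward (F₁ G₁ : ℕ → ℕ → ℂ)
    (h : ∀ n k, F₁ (n + 1) k - F₁ n k = G₁ n (k + 1) - G₁ n k)
    (F₂ G₂ : ℕ → ℕ → ℂ)
    (hF₂ : ∀ n k, F₂ n k = F₁ n (k + n))
    (hG₂ : ∀ n k, G₂ n k = F₁ (n + 1) (k + n) + G₁ n (k + n)) :
    ∀ n k, F₂ (n + 1) k - F₂ n k = G₂ n (k + 1) - G₂ n k := by
  intro n k
  rw [hF₂, hF₂, hG₂, hG₂, show k + (n + 1) = k + n + 1 by omega,
    show k + 1 + n = k + n + 1 by omega]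
  linear_combination h n (k + n)
end

section
/- The pair F(n,k) = (−1)^n 2^{−3n−k} · (1/2 − k)_n (1/2 + k)_n² / ((1)_n² (1+k)_n) · (1/2)_k / (1)_k · 16n² / (2n − 2k − 1) and G(n,k) = (−1)^n 2^{−3n−k} · (1/2 − k)_n (1/2 + k)_n² / ((1)_n² (1+k)_n) · (1/2)_k / (1)_k · (6n + 2k + 1) satisfies the WZ relation F(n+1,k) − F(n,k) = G(n,k+1) − G(n,k) for all nonnegative integers n, k. -/
/-!
`F` and `G` are the hypergeometric term `T(n, k)` (`wzKernel`, their common prefactor) times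
rational functions of `n` and `k`. The ratios `T(n+1, k) / T(n, k)` and `T(n, k+1) / T(n, k)` are
rational as well, so dividing the WZ relation by `T(n, k)` leaves an identity between rational
functions. Its denominators never vanish: besides positive factors they are `2(n - k) ± 1`, odd.
-/

/-- The rising factorial (Pochhammer symbol) `(x)_n = x(x+1)⋯(x+n-1)`. -/
def risingFac (x : ℚ) (n : ℕ) : ℚ := ∏ j ∈ Finset.range n, (x + j)

noncomputable def wzF (n k : ℕ) : ℚ :=
  (-1) ^ n / 2 ^ (3 * n + k) *
    (risingFac (1/2 - k) n * risingFac (1/2 + k) n ^ 2 /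
      (risingFac 1 n ^ 2 * risingFac (1 + k) n)) *
    (risingFac (1/2) k / risingFac 1 k) *
    (16 * n ^ 2 / (2 * (n : ℚ) - 2 * k - 1))

noncomputable def wzG (n k : ℕ) : ℚ :=
  (-1) ^ n / 2 ^ (3 * n + k) *
    (risingFac (1/2 - k) n * risingFac (1/2 + k) n ^ 2 /
      (risingFac 1 n ^ 2 * risingFac (1 + k) n)) *
    (risingFac (1/2) k / risingFac 1 k) *
    (6 * n + 2 * k + 1)

lemma risingFac_succ (x : ℚ) (n : ℕ) : risingFac x (n + 1) = risingFac x n * (x + n) :=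
  Finset.prod_range_succ _ n

lemma mul_risingFac_add_one (x : ℚ) (n : ℕ) :
    x * risingFac (x + 1) n = risingFac x n * (x + n) := by
  induction n with
  | zero => simp [risingFac]
  | succ m ih =>
    rw [risingFac_succ, risingFac_succ]
    push_cast
    linear_combination (x + 1 + (m : ℚ)) * ih

lemma two_mul_natCast_sub_sub_one_ne_zero (n k : ℕ) : 2 * ((n : ℚ) - k) - 1 ≠ 0 := by
  intro h
  have : 2 * ((n : ℤ) - k) - 1 = 0 := by exact_mod_cast h
  omega

noncomputable def wzKernel (n k : ℕ) : ℚ :=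
  (-1) ^ n / 2 ^ (3 * n + k) *
    (risingFac (1/2 - k) n * risingFac (1/2 + k) n ^ 2 /
      (risingFac 1 n ^ 2 * risingFac (1 + k) n)) *
    (risingFac (1/2) k / risingFac 1 k)

lemma wzF_eq (n k : ℕ) :
    wzF n k = wzKernel n k * (16 * n ^ 2 / (2 * (n : ℚ) - 2 * k - 1)) := rfl

lemma wzG_eq (n k : ℕ) : wzG n k = wzKernel n k * (6 * n + 2 * k + 1) := rfl

lemma wzKernel_succ_left (n k : ℕ) :
    wzKernel (n + 1) k = -wzKernel n k *
      ((2 * (n - k) + 1) * (2 * n + 2 * k + 1) ^ 2 / (64 * (n + 1) ^ 2 * (n + k + 1))) := by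
  simp only [wzKernel, risingFac_succ, div_eq_mul_inv, mul_inv, mul_pow]
  ring

lemma wzKernel_succ_right (n k : ℕ) :
    wzKernel n (k + 1) = -wzKernel n k *
      ((2 * n + 2 * k + 1) ^ 2 / (4 * (2 * (n - k) - 1) * (n + k + 1))) := by
  have hnk := two_mul_natCast_sub_sub_one_ne_zero n k
  have ha : risingFac (1/2 - (k + 1)) n =
      -(2 * k + 1) * risingFac (1/2 - k) n / (2 * (n - k) - 1) := by
    have h := mul_risingFac_add_one (1/2 - (k + 1)) n
    rw [show (1/2 : ℚ) - (k + 1) + 1 = 1/2 - k by ring] at h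
    rw [eq_div_iff hnk]
    linear_combination -2 * h
  have hb : risingFac (1/2 + (k + 1)) n = risingFac (1/2 + k) n * (1/2 + k + n) / (1/2 + k) := by
    rw [eq_div_iff (by positivity), mul_comm, ← mul_risingFac_add_one, add_assoc]
  have hc : risingFac (1 + (k + 1)) n = risingFac (1 + k) n * (1 + k + n) / (1 + k) := by
    rw [eq_div_iff (by positivity), mul_comm, ← mul_risingFac_add_one, add_assoc]
  simp only [wzKernel]
  push_cast
  rw [ha, hb, hc, risingFac_succ, risingFac_succ]
  field_simp
  ring

lemma wzF_succ_left (n k : ℕ) :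
    wzF (n + 1) k = -wzKernel n k * ((2 * n + 2 * k + 1) ^ 2 / (4 * (n + k + 1))) := by
  have hnk : 2 * ((n : ℚ) - k) + 1 ≠ 0 := by
    convert two_mul_natCast_sub_sub_one_ne_zero (n + 1) k using 1
    push_cast
    ring
  rw [wzF_eq, wzKernel_succ_left]
  push_cast
  rw [show 2 * ((n : ℚ) + 1) - 2 * k - 1 = 2 * (n - k) + 1 by ring]
  field_simp
  ring

lemma wzG_succ_right (n k : ℕ) :
    wzG n (k + 1) = -wzKernel n k *
      ((2 * n + 2 * k + 1) ^ 2 * (6 * n + 2 * k + 3) / (4 * (2 * (n - k) - 1) * (n + k + 1))) := by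
  rw [wzG_eq, wzKernel_succ_right]
  push_cast
  ring

/-- The pair 3.2 of Guillera's thesis satisfies the WZ relation. -/
theorem wz_pair_3_2 :
    ∀ n k : ℕ, wzF (n + 1) k - wzF n k = wzG n (k + 1) - wzG n k := by
  intro n k
  have hnk := two_mul_natCast_sub_sub_one_ne_zero n k
  rw [wzF_succ_left, wzF_eq, wzG_succ_right, wzG_eq]
  field_simp
  ring
end

section
/- Define F(n,k) = (−1)^{n+k} q^{(n+k)(3n−k)} (q;q²)_{n−k−1} (q;q²)_{n+k}² / ((q⁴;q⁴)_{n−1}² (q⁴;q⁴)_{n+k}) · 1/(1−q) and G(n,k) = (−1)^{n+k} q^{(n+k)(3n−k)} (q;q²)_{n−k} (q;q²)_{n+k}² / ((q⁴;q⁴)_n² (q⁴;q⁴)_{n+k}) · [6n+2k+1]_q, where [m]_q = (1−q^m)/(1−q). Then (F,G) is a q-WZ pair: F(n+1,k) − F(n,k) = G(n,k+1) − G(n,k) for all nonnegative integers n, k with n ≥ k + 1 (and F(0,k) = 0 with the convention that (q⁴;q⁴)_{−1}² in the denominator makes F(0,k) vanish). -/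
/-- The q-Pochhammer symbol `(a; p)_m = ∏_{j=0}^{m-1} (1 - a p^j)`, extended to
negative integer indices by `(a; p)_{-n} = (∏_{j=1}^{n} (1 - a p^{-j}))⁻¹`. -/
noncomputable def qPochZ (a p : ℝ) (m : ℤ) : ℝ :=
  if 0 ≤ m then ∏ j ∈ Finset.range m.toNat, (1 - a * p ^ j)
  else (∏ j ∈ Finset.range (-m).toNat, (1 - a * p ^ (-(j : ℤ) - 1)))⁻¹

/-- `[m]_q = (1 - q^m)/(1 - q)`. -/
noncomputable def qBracket (q : ℝ) (m : ℕ) : ℝ := (1 - q ^ m) / (1 - q)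

noncomputable def guoF (q : ℝ) (n k : ℕ) : ℝ :=
  if n = 0 then 0 else
    (-1) ^ (n + k) * q ^ (((n : ℤ) + k) * (3 * n - k)) *
      (qPochZ q (q ^ 2) ((n : ℤ) - k - 1) * qPochZ q (q ^ 2) ((n : ℤ) + k) ^ 2 /
        (qPochZ (q ^ 4) (q ^ 4) ((n : ℤ) - 1) ^ 2 * qPochZ (q ^ 4) (q ^ 4) ((n : ℤ) + k))) *
      (1 / (1 - q))

noncomputable def guoG (q : ℝ) (n k : ℕ) : ℝ :=
  (-1) ^ (n + k) * q ^ (((n : ℤ) + k) * (3 * n - k)) *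
    (qPochZ q (q ^ 2) ((n : ℤ) - k) * qPochZ q (q ^ 2) ((n : ℤ) + k) ^ 2 /
      (qPochZ (q ^ 4) (q ^ 4) (n : ℤ) ^ 2 * qPochZ (q ^ 4) (q ^ 4) ((n : ℤ) + k))) *
    qBracket q (6 * n + 2 * k + 1)

/-! Writing `n = a + k + 1`, every Pochhammer symbol in the four terms of the WZ relation is
`(q;q²)` or `(q⁴;q⁴)` at one of the indices `a`, `n + k` (resp. `a + k`, `n + k`) or at one more
than these, hence equals a base symbol times one linear factor `1 - q^j`. Cancelling the base
symbols leaves a polynomial identity in `q`, `q^a`, `q^k`. -/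

open Finset

theorem qPochZ_natCast (a p : ℝ) (m : ℕ) :
    qPochZ a p m = ∏ j ∈ range m, (1 - a * p ^ j) := by
  rw [qPochZ, if_pos (Int.natCast_nonneg m), Int.toNat_natCast]

theorem qPochZ_natCast_succ (a p : ℝ) (m : ℕ) :
    qPochZ a p ((m + 1 : ℕ) : ℤ) = qPochZ a p m * (1 - a * p ^ m) := by
  rw [qPochZ_natCast, qPochZ_natCast, prod_range_succ]

theorem one_sub_mul_pow_ne_zero {a p : ℝ} (ha : |a| < 1) (hp : |p| ≤ 1) (m : ℕ) :
    1 - a * p ^ m ≠ 0 := by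
  have hlt : |a * p ^ m| < 1 := by
    rw [abs_mul, abs_pow]
    calc |a| * |p| ^ m ≤ |a| * 1 := by gcongr; exact pow_le_one₀ (abs_nonneg p) hp
      _ < 1 := by rwa [mul_one]
  intro h
  rw [show a * p ^ m = 1 by linarith, abs_one] at hlt
  exact lt_irrefl 1 hlt

theorem qPochZ_natCast_ne_zero {a p : ℝ} (ha : |a| < 1) (hp : |p| ≤ 1) (m : ℕ) :
    qPochZ a p m ≠ 0 := by
  rw [qPochZ_natCast]
  exact prod_ne_zero_iff.mpr fun j _ => one_sub_mul_pow_ne_zero ha hp j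

section GuoLiu

variable (q : ℝ)

theorem guoF_eq_of_add_eq {n k a : ℕ} (h : a + k + 1 = n) :
    guoF q n k = (-1) ^ (n + k) * q ^ ((n + k) * (3 * a + 2 * k + 3)) *
      (qPochZ q (q ^ 2) a * qPochZ q (q ^ 2) ((n + k : ℕ) : ℤ) ^ 2 /
        (qPochZ (q ^ 4) (q ^ 4) ((a + k : ℕ) : ℤ) ^ 2 * qPochZ (q ^ 4) (q ^ 4) ((n + k : ℕ) : ℤ))) *
      (1 / (1 - q)) := by
  rw [guoF, if_neg (by omega),
    show ((n : ℤ) + k) * (3 * n - k) = (((n + k) * (3 * a + 2 * k + 3) : ℕ) : ℤ) by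
      subst h; push_cast; ring,
    zpow_natCast, show (n : ℤ) - k - 1 = a by omega,
    show (n : ℤ) - 1 = ((a + k : ℕ) : ℤ) by push_cast; omega, ← Nat.cast_add]

theorem guoG_eq_of_add_eq {n k a : ℕ} (h : a + k = n) :
    guoG q n k = (-1) ^ (n + k) * q ^ ((n + k) * (3 * a + 2 * k)) *
      (qPochZ q (q ^ 2) a * qPochZ q (q ^ 2) ((n + k : ℕ) : ℤ) ^ 2 /
        (qPochZ (q ^ 4) (q ^ 4) n ^ 2 * qPochZ (q ^ 4) (q ^ 4) ((n + k : ℕ) : ℤ))) *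
      qBracket q (6 * n + 2 * k + 1) := by
  rw [guoG, show ((n : ℤ) + k) * (3 * n - k) = (((n + k) * (3 * a + 2 * k) : ℕ) : ℤ) by
      subst h; push_cast; ring,
    zpow_natCast, show (n : ℤ) - k = a by omega, ← Nat.cast_add]

end GuoLiu

/-- The Guo–Liu q-WZ pair satisfies the q-WZ relation for `n ≥ k + 1`,
and `F(0,k) = 0`. -/
theorem guo_liu_qWZ_pair (q : ℝ) (hq0 : 0 < q) (hq1 : q < 1) :
    (∀ n k : ℕ, k + 1 ≤ n →
      guoF q (n + 1) k - guoF q n k = guoG q n (k + 1) - guoG q n k) ∧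
    (∀ k : ℕ, guoF q 0 k = 0) := by
  refine ⟨fun n k hk => ?_, fun k => if_pos rfl⟩
  obtain ⟨a, rfl⟩ : ∃ a, n = a + k + 1 := ⟨n - k - 1, by omega⟩
  rw [guoF_eq_of_add_eq q (a := a + 1) (by ring), guoF_eq_of_add_eq q rfl,
    guoG_eq_of_add_eq q (a := a) (by ring), guoG_eq_of_add_eq q (a := a + 1) (by ring),
    add_right_comm _ 1 k, add_right_comm a 1 k, ← add_assoc _ k 1]
  simp only [qPochZ_natCast_succ, qBracket]
  have hq4 : |q ^ 4| < 1 := by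
    rw [abs_of_pos (by positivity)]
    exact pow_lt_one₀ hq0.le hq1 (by norm_num)
  have hQ := qPochZ_natCast_ne_zero hq4 hq4.le
  have hL := one_sub_mul_pow_ne_zero hq4 hq4.le
  have h1q : 1 - q ≠ 0 := by linarith
  field_simp [hQ, hL]
  ring
end

section
/- The pair F(n,k) = 18(−1)^k (1/2)_{n+k}² (1/2)_{2n−k−1} (1/2)_k / ((1)_{n−1}² (1)_{2n+2k}) · 3^k / 9^n and G(n,k) = (−1)^k (1/2)_{n+k}² (1/2)_{2n−k} (1/2)_k / ((1)_n² (1)_{2n+2k}) · 3^k / 9^n · (8n+2k+1) satisfies the WZ relation F(n+1,k) − F(n,k) = G(n,k+1) − G(n,k) for all nonnegative integers n and k (with the convention that (1)_{n−1} for n = 0 makes F(0,k) = 0, i.e. F(0,k) is defined to be 0). -/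
/-- The rising factorial `(x)_m` extended to integer indices:
`(x)_m = x(x+1)⋯(x+m-1)` for `m ≥ 0` and `(x)_{-n} = ((x-1)(x-2)⋯(x-n))⁻¹`. -/
noncomputable def risingZ (x : ℚ) (m : ℤ) : ℚ :=
  if 0 ≤ m then ∏ j ∈ Finset.range m.toNat, (x + j)
  else (∏ j ∈ Finset.range (-m).toNat, (x - 1 - j))⁻¹

noncomputable def wzF7 (n k : ℕ) : ℚ :=
  if n = 0 then 0 else
    18 * (-1) ^ k *
      (risingZ (1/2) ((n : ℤ) + k) ^ 2 * risingZ (1/2) (2 * (n : ℤ) - k - 1) *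
        risingZ (1/2) (k : ℤ) /
        (risingZ 1 ((n : ℤ) - 1) ^ 2 * risingZ 1 (2 * (n : ℤ) + 2 * k))) *
      (3 ^ k / 9 ^ n)

noncomputable def wzG7 (n k : ℕ) : ℚ :=
  (-1) ^ k *
    (risingZ (1/2) ((n : ℤ) + k) ^ 2 * risingZ (1/2) (2 * (n : ℤ) - k) *
      risingZ (1/2) (k : ℤ) /
      (risingZ 1 (n : ℤ) ^ 2 * risingZ 1 (2 * (n : ℤ) + 2 * k))) *
    (3 ^ k / 9 ^ n) * (8 * n + 2 * k + 1)

/-!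
All four terms of the WZ relation are hypergeometric, and shifting an index by one multiplies a
rising factorial by a single linear factor. Hence `F(n, k)`, `G(n + 1, k)` and `G(n, k + 1)` are each
`G(n, k)` times an explicit rational function of `n` and `k`, and after dividing by `G(n, k)` the
relation becomes an identity of rational functions, checked by clearing denominators. The only
denominators that could vanish are the odd numbers `4n - 2k - 1`, which never do; half-integer
rising factorials never vanish because `1/2` is not an integer.
-/

lemma risingZ_add_one (x : ℚ) (m : ℤ) (h : x + m ≠ 0) :
    risingZ x (m + 1) = risingZ x m * (x + m) := by
  unfold risingZ
  rcases le_or_gt 0 m with hm | hm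
  · have hcast : (m.toNat : ℚ) = m := by exact_mod_cast Int.toNat_of_nonneg hm
    rw [if_pos (by omega), if_pos hm, show (m + 1).toNat = m.toNat + 1 by omega,
      Finset.prod_range_succ, hcast]
  · rw [if_neg (show ¬0 ≤ m by omega)]
    rcases eq_or_lt_of_le (show m ≤ -1 by omega) with rfl | hlt
    · norm_num [← sub_eq_add_neg] at h ⊢
      exact (inv_mul_cancel₀ h).symm
    · have hcast : ((-(m + 1)).toNat : ℚ) = -(m + 1) := by
        exact_mod_cast Int.toNat_of_nonneg (by omega : 0 ≤ -(m + 1))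
      rw [if_neg (show ¬0 ≤ m + 1 by omega), show (-m).toNat = (-(m + 1)).toNat + 1 by omega,
        Finset.prod_range_succ, hcast, show x - 1 - -((m : ℚ) + 1) = x + m by ring, mul_inv,
        inv_mul_cancel_right₀ h]

lemma risingZ_pos {x : ℚ} (hx : 0 < x) {m : ℤ} (hm : 0 ≤ m) : 0 < risingZ x m := by
  rw [risingZ, if_pos hm]
  exact Finset.prod_pos fun j _ => by positivity

lemma risingZ_ne_zero {x : ℚ} (hx : ∀ z : ℤ, x ≠ z) (m : ℤ) : risingZ x m ≠ 0 := by
  unfold risingZ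
  split
  · refine Finset.prod_ne_zero_iff.2 fun j _ h => hx (-j) ?_
    push_cast
    linarith
  · refine inv_ne_zero (Finset.prod_ne_zero_iff.2 fun j _ h => hx (j + 1) ?_)
    push_cast
    linarith

lemma half_ne_intCast (z : ℤ) : (1 / 2 : ℚ) ≠ z := by
  intro h
  have : 2 * z = 1 := by exact_mod_cast (by linarith : (2 * z : ℚ) = 1)
  omega

lemma risingZ_half_ne_zero (m : ℤ) : risingZ (1 / 2) m ≠ 0 :=
  risingZ_ne_zero half_ne_intCast m

lemma risingZ_one_ne_zero {m : ℤ} (hm : 0 ≤ m) : risingZ 1 m ≠ 0 :=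
  (risingZ_pos one_pos hm).ne'

lemma risingZ_half_add_one (m : ℤ) :
    risingZ (1 / 2) (m + 1) = risingZ (1 / 2) m * ((2 * m + 1) / 2) := by
  rw [risingZ_add_one _ m fun h => half_ne_intCast (-m) (by push_cast; linarith)]
  ring

lemma risingZ_one_add_one {m : ℤ} (hm : 0 ≤ m) : risingZ 1 (m + 1) = risingZ 1 m * (m + 1) := by
  rw [risingZ_add_one _ m (by positivity)]
  ring

lemma four_mul_sub_two_mul_sub_one_ne_zero {R : Type*} [Ring R] [CharZero R] (n k : ℕ) :
    (4 * n - 2 * k - 1 : R) ≠ 0 := by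
  exact_mod_cast (by omega : (4 * n - 2 * k - 1 : ℤ) ≠ 0)

-- The factor `n ^ 2` lets this cover `n = 0`, where `wzF7` is set to `0`.
lemma wzF7_eq_wzG7_mul (n k : ℕ) :
    wzF7 n k = wzG7 n k * (36 * n ^ 2 / ((4 * n - 2 * k - 1) * (8 * n + 2 * k + 1))) := by
  rcases n with _ | n
  · simp [wzF7]
  have hodd := four_mul_sub_two_mul_sub_one_ne_zero (R := ℚ) (n + 1) k
  have := risingZ_half_ne_zero (n + 1 + k)
  have := risingZ_half_ne_zero (2 * n - k + 1)
  have := risingZ_half_ne_zero k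
  have := risingZ_one_ne_zero (Int.natCast_nonneg n)
  rw [mul_div_assoc', eq_div_iff (mul_ne_zero hodd (by positivity))]
  unfold wzF7 wzG7
  push_cast
  rw [show (n + 1 : ℤ) - 1 = n by ring, show 2 * (n + 1 : ℤ) - k - 1 = 2 * n - k + 1 by ring,
    show 2 * (n + 1 : ℤ) - k = 2 * n - k + 1 + 1 by ring, risingZ_half_add_one (2 * n - k + 1),
    risingZ_one_add_one (Int.natCast_nonneg n)]
  push_cast
  field_simp
  ring

lemma wzG7_succ_left (n k : ℕ) :
    wzG7 (n + 1) k = wzG7 n k * ((2 * n + 2 * k + 1) * (4 * n - 2 * k + 1) * (4 * n - 2 * k + 3) *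
      (8 * n + 2 * k + 9) / (288 * (n + 1) ^ 2 * (n + k + 1) * (8 * n + 2 * k + 1))) := by
  have := risingZ_half_ne_zero (2 * n - k)
  have := risingZ_half_ne_zero k
  rw [mul_div_assoc', eq_div_iff (by positivity)]
  unfold wzG7
  push_cast
  rw [show (n + 1 : ℤ) + k = n + k + 1 by ring, show 2 * (n + 1 : ℤ) - k = 2 * n - k + 1 + 1 by ring,
    show 2 * (n + 1 : ℤ) + 2 * k = 2 * n + 2 * k + 1 + 1 by ring,
    risingZ_half_add_one (n + k), risingZ_half_add_one (2 * n - k + 1),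
    risingZ_half_add_one (2 * n - k), risingZ_one_add_one (Int.natCast_nonneg n),
    risingZ_one_add_one (by positivity : 0 ≤ 2 * (n : ℤ) + 2 * k + 1),
    risingZ_one_add_one (by positivity : 0 ≤ 2 * (n : ℤ) + 2 * k)]
  push_cast
  field_simp
  ring

lemma wzG7_succ_right (n k : ℕ) :
    wzG7 n (k + 1) = wzG7 n k * (-3 * (2 * n + 2 * k + 1) * (2 * k + 1) * (8 * n + 2 * k + 3) /
      (8 * (4 * n - 2 * k - 1) * (n + k + 1) * (8 * n + 2 * k + 1))) := by
  have hodd := four_mul_sub_two_mul_sub_one_ne_zero (R := ℚ) n k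
  have := risingZ_half_ne_zero (n + k)
  have := risingZ_half_ne_zero (2 * n - (k + 1))
  have := risingZ_half_ne_zero k
  have := risingZ_one_ne_zero (Int.natCast_nonneg n)
  rw [mul_div_assoc', eq_div_iff
    (mul_ne_zero (mul_ne_zero (mul_ne_zero (by norm_num) hodd) (by positivity)) (by positivity))]
  unfold wzG7
  push_cast
  rw [show (n : ℤ) + (k + 1) = n + k + 1 by ring, show 2 * (n : ℤ) - k = 2 * n - (k + 1) + 1 by ring,
    show 2 * (n : ℤ) + 2 * (k + 1) = 2 * n + 2 * k + 1 + 1 by ring,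
    risingZ_half_add_one (n + k), risingZ_half_add_one (2 * n - (k + 1)), risingZ_half_add_one k,
    risingZ_one_add_one (by positivity : 0 ≤ 2 * (n : ℤ) + 2 * k + 1),
    risingZ_one_add_one (by positivity : 0 ≤ 2 * (n : ℤ) + 2 * k)]
  push_cast
  field_simp
  ring

lemma wz7_ratio_identity {K : Type*} [Field K] [CharZero K] {n k : K} (h₁ : n + 1 ≠ 0)
    (h₂ : n + k + 1 ≠ 0) (h₃ : 8 * n + 2 * k + 1 ≠ 0) (h₄ : 8 * (n + 1) + 2 * k + 1 ≠ 0)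
    (h₅ : 4 * n - 2 * k - 1 ≠ 0) (h₆ : 4 * (n + 1) - 2 * k - 1 ≠ 0) :
    (2 * n + 2 * k + 1) * (4 * n - 2 * k + 1) * (4 * n - 2 * k + 3) * (8 * n + 2 * k + 9) /
          (288 * (n + 1) ^ 2 * (n + k + 1) * (8 * n + 2 * k + 1)) *
        (36 * (n + 1) ^ 2 / ((4 * (n + 1) - 2 * k - 1) * (8 * (n + 1) + 2 * k + 1))) -
      36 * n ^ 2 / ((4 * n - 2 * k - 1) * (8 * n + 2 * k + 1)) =
    -3 * (2 * n + 2 * k + 1) * (2 * k + 1) * (8 * n + 2 * k + 3) /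
      (8 * (4 * n - 2 * k - 1) * (n + k + 1) * (8 * n + 2 * k + 1)) - 1 := by
  rw [div_mul_div_comm, div_sub_div _ _ (by simp [*]) (by simp [*]), div_sub_one (by simp [*]),
    div_eq_div_iff (by simp [*]) (by simp [*])]
  ring

/-- WZ pair 7 of Guillera's thesis satisfies the WZ relation. -/
theorem wz_pair_7 :
    ∀ n k : ℕ, wzF7 (n + 1) k - wzF7 n k = wzG7 n (k + 1) - wzG7 n k := by
  intro n k
  rw [wzF7_eq_wzG7_mul, wzF7_eq_wzG7_mul, wzG7_succ_left, wzG7_succ_right, mul_assoc, ← mul_sub,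
    ← mul_sub_one]
  congr 1
  push_cast
  exact wz7_ratio_identity (by positivity) (by positivity) (by positivity) (by positivity)
    (four_mul_sub_two_mul_sub_one_ne_zero n k)
    (by simpa using four_mul_sub_two_mul_sub_one_ne_zero (R := ℚ) (n + 1) k)
end
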